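/- arXiv:2309.03500 — 2 statements merged into one kernel-verified Lean document; each statement's English description precedes it below -/
import Mathlib

section
/- In the degree-0/1 WLPR setting with n ≥ 2 and weights given by a profile φ, define p₀ : [0, n−1] → ℝ by p₀(t) = φ((2t+1)/λ) / φ(2t/λ) (well defined since (2n−1)/λ < 1). If p₀ is decreasing on [0, n−1], then all coefficients of the difference mask q of S_{1,w^λ} are positive: q_{2j} > 0 and q_{2j+1} > 0 for all j = 1−n,…,n−1. -/
/-- `‖w⁰‖₁ = 1 + 2 ∑_{l=1}^{n−1} w_{2l}`. -/
noncomputable def normW0 (n : ℕ) (w : ℕ → ℝ) : ℝ :=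
  1 + 2 * ∑ l ∈ Finset.Icc 1 (n - 1), w (2 * l)

/-- `‖w¹‖₁ = 2 ∑_{l=0}^{n−1} w_{2l+1}`. -/
noncomputable def normW1 (n : ℕ) (w : ℕ → ℝ) : ℝ :=
  2 * ∑ l ∈ Finset.Icc 0 (n - 1), w (2 * l + 1)

/-- `q_{2j} = ∑_{l=1−n}^{j} (w_{2|l|}/‖w⁰‖₁ − w_{|2l−1|}/‖w¹‖₁)`. -/
noncomputable def qEven (n : ℕ) (w : ℕ → ℝ) (j : ℤ) : ℝ :=
  ∑ l ∈ Finset.Icc (1 - (n : ℤ)) j,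
    (w ((2 * l).natAbs) / normW0 n w - w ((2 * l - 1).natAbs) / normW1 n w)

/-- `q_{2j+1} = ∑_{l=j}^{n−1} (w_{2|l|}/‖w⁰‖₁ − w_{|2l+1|}/‖w¹‖₁)`. -/
noncomputable def qOdd (n : ℕ) (w : ℕ → ℝ) (j : ℤ) : ℝ :=
  ∑ l ∈ Finset.Icc j ((n : ℤ) - 1),
    (w ((2 * l).natAbs) / normW0 n w - w ((2 * l + 1).natAbs) / normW1 n w)

/-!
Write `q_{2j} = ∑_{l=1-n}^{j} e_l` (`e = qEvenTerm`). Read at the half-integers `t = a/2`,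
monotonicity of `p₀` says that the ratios `w_{a+1}/w_a` decrease. Hence, within each of the blocks `l ∈ [1-n, 0]` and
`l ∈ [1, n-1]`, once `e_l ≤ 0` it stays so, and the partial sums over a block are bounded below by
their values at its two ends: `q_{2(1-n)}`, `q_0 = 1/(2‖w⁰‖₁)` and `q_{2(n-1)} = w_{2n-1}/‖w¹‖₁`.
The first one is positive because `w_{2n-1}/w_{2n-2} ≤ w_{2k+1}/w_{2k}` for every `k`, which after
summation over `k` gives `w_{2n-1} (‖w⁰‖₁ + 1) ≤ w_{2n-2} ‖w¹‖₁`.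
Finally `q_{2j+1} = q_{-2j}` by the symmetry `l ↦ -l`.
-/

open Finset

section PartialSums

variable {α : Type*} [LinearOrder α] [LocallyFiniteOrder α]

theorem sum_Icc_eq_sum_Icc_add_sum_Ioc {M : Type*} [AddCommMonoid M] (f : α → M) {lo a m : α}
    (hla : lo ≤ a) (ham : a ≤ m) :
    ∑ l ∈ Icc lo m, f l = ∑ l ∈ Icc lo a, f l + ∑ l ∈ Ioc a m, f l := by
  have hunion : Icc lo m = Icc lo a ∪ Ioc a m := by
    rw [← coe_inj, coe_union, coe_Icc, coe_Icc, coe_Ioc, Set.Icc_union_Ioc_eq_Icc hla ham]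
  rw [hunion, sum_union <|
    disjoint_left.2 fun l hl hl' => (mem_Icc.1 hl).2.not_gt (mem_Ioc.1 hl').1]

theorem min_le_sum_Icc_of_sign_change_once {M : Type*} [AddCommMonoid M] [LinearOrder M]
    [IsOrderedAddMonoid M] {f : α → M} {lo a m b : α}
    (hla : lo ≤ a) (ham : a ≤ m) (hmb : m ≤ b)
    (hf : ∀ p q, a < p → p ≤ q → q ≤ b → f p ≤ 0 → f q ≤ 0) :
    min (∑ l ∈ Icc lo a, f l) (∑ l ∈ Icc lo b, f l) ≤ ∑ l ∈ Icc lo m, f l := by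
  by_cases htail : ∀ q ∈ Ioc m b, f q ≤ 0
  · refine min_le_of_right_le ?_
    rw [sum_Icc_eq_sum_Icc_add_sum_Ioc f (hla.trans ham) hmb]
    exact add_le_of_nonpos_right (sum_nonpos htail)
  · push Not at htail
    obtain ⟨q, hq, hfq⟩ := htail
    rw [mem_Ioc] at hq
    refine min_le_of_left_le ?_
    rw [sum_Icc_eq_sum_Icc_add_sum_Ioc f hla ham]
    refine le_add_of_nonneg_right (sum_nonneg fun p hp => ?_)
    rw [mem_Ioc] at hp
    by_contra! hfp
    exact hfq.not_ge (hf p q hp.1 (hp.2.trans hq.1.le) hq.2 hfp.le)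

end PartialSums

theorem sum_Icc_one_sub_natCast_zero {M : Type*} [AddCommMonoid M] (f : ℤ → M) (n : ℕ) :
    ∑ l ∈ Icc (1 - (n : ℤ)) 0, f l = ∑ k ∈ range n, f (-k) := by
  refine sum_nbij' (fun l => (-l).toNat) (fun k => -(k : ℤ)) ?_ ?_ ?_ ?_
    fun l hl => congrArg f ?_
  all_goals intros; simp only [mem_Icc, mem_range] at *; omega

theorem sum_Ioc_zero_natCast {M : Type*} [AddCommMonoid M] (f : ℤ → M) (m : ℕ) :
    ∑ l ∈ Ioc 0 (m : ℤ), f l = ∑ k ∈ range m, f (k + 1) := by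
  refine sum_nbij' (fun l => (l - 1).toNat) (fun k => (k : ℤ) + 1) ?_ ?_ ?_ ?_
    fun l hl => congrArg f ?_
  all_goals intros; simp only [mem_Ioc, mem_range] at *; omega

theorem div_sub_div_nonpos_of_mul_le {K : Type*} [Field K] [LinearOrder K] [IsStrictOrderedRing K]
    {x y x' y' a b : K} (ha : 0 < a) (hb : 0 < b) (hy : 0 < y)
    (hy' : 0 ≤ y') (hcross : x' * y ≤ x * y') (h : x / a - y / b ≤ 0) :
    x' / a - y' / b ≤ 0 := by
  rw [sub_nonpos, div_le_div_iff₀ ha hb] at h ⊢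
  refine le_of_mul_le_mul_left ?_ hy
  nlinarith [mul_le_mul_of_nonneg_right hcross hb.le, mul_le_mul_of_nonneg_left h hy']

/-- Cross-multiplied form of: `a ↦ w (a + 1) / w a` is antitone on `a + 1 < M`. -/
def RatioAntitoneBelow (w : ℕ → ℝ) (M : ℕ) : Prop :=
  ∀ a b, a ≤ b → b + 1 < M → w a * w (b + 1) ≤ w (a + 1) * w b

noncomputable def qEvenTerm (n : ℕ) (w : ℕ → ℝ) (l : ℤ) : ℝ :=
  w ((2 * l).natAbs) / normW0 n w - w ((2 * l - 1).natAbs) / normW1 n w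

section Weights

variable {n : ℕ} {w : ℕ → ℝ}

theorem qEven_eq_sum_qEvenTerm (j : ℤ) :
    qEven n w j = ∑ l ∈ Icc (1 - (n : ℤ)) j, qEvenTerm n w l := rfl

theorem normW0_eq_sum_range (hn : 1 ≤ n) (hw0 : w 0 = 1) :
    normW0 n w = 2 * ∑ k ∈ range n, w (2 * k) - 1 := by
  obtain ⟨m, rfl⟩ : ∃ m, n = m + 1 := ⟨n - 1, by omega⟩
  rw [normW0, Nat.add_sub_cancel, sum_range_succ', ← Ico_add_one_right_eq_Icc,
    sum_Ico_eq_sum_range, Nat.add_sub_cancel, hw0]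
  simp only [add_comm 1]
  ring

theorem normW1_eq_sum_range (hn : 1 ≤ n) :
    normW1 n w = 2 * ∑ k ∈ range n, w (2 * k + 1) := by
  obtain ⟨m, rfl⟩ : ∃ m, n = m + 1 := ⟨n - 1, by omega⟩
  rw [normW1, Nat.add_sub_cancel, ← Nat.range_succ_eq_Icc_zero]

theorem normW0_pos (hpos : ∀ l < 2 * n, 0 < w l) : 0 < normW0 n w := by
  have : 0 ≤ ∑ l ∈ Icc 1 (n - 1), w (2 * l) :=
    sum_nonneg fun l hl => (hpos _ (by simp only [mem_Icc] at hl; omega)).le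
  rw [normW0]; linarith

theorem normW1_pos (hn : 1 ≤ n) (hpos : ∀ l < 2 * n, 0 < w l) : 0 < normW1 n w := by
  rw [normW1_eq_sum_range hn]
  exact mul_pos two_pos <| sum_pos (fun k hk => hpos _ (by simp only [mem_range] at hk; omega))
    ⟨0, mem_range.2 hn⟩

theorem qEven_zero (hn : 1 ≤ n) (hw0 : w 0 = 1) (hpos : ∀ l < 2 * n, 0 < w l) :
    qEven n w 0 = (2 * normW0 n w)⁻¹ := by
  have hN0 := (normW0_pos hpos).ne'
  have hN1 := (normW1_pos hn hpos).ne'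
  have hterm : ∀ k : ℕ, qEvenTerm n w (-k) =
      w (2 * k) / normW0 n w - w (2 * k + 1) / normW1 n w := by
    intro k
    rw [qEvenTerm, show (2 * -(k : ℤ)).natAbs = 2 * k by omega,
      show (2 * -(k : ℤ) - 1).natAbs = 2 * k + 1 by omega]
  rw [qEven_eq_sum_qEvenTerm, sum_Icc_one_sub_natCast_zero]
  simp only [hterm, sum_sub_distrib, ← sum_div]
  rw [normW0_eq_sum_range hn hw0] at hN0 ⊢
  rw [normW1_eq_sum_range hn] at hN1 ⊢
  rw [div_sub_div _ _ hN0 hN1, inv_eq_one_div,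
    div_eq_div_iff (mul_ne_zero hN0 hN1) (mul_ne_zero two_ne_zero hN0)]
  ring

theorem qEven_sub_one (hn : 1 ≤ n) (hw0 : w 0 = 1) (hpos : ∀ l < 2 * n, 0 < w l) :
    qEven n w (n - 1) = w (2 * n - 1) / normW1 n w := by
  have hN0 := (normW0_pos hpos).ne'
  have hN1 := (normW1_pos hn hpos).ne'
  have hA := normW0_eq_sum_range hn hw0
  have hB := normW1_eq_sum_range (w := w) hn
  obtain ⟨m, rfl⟩ : ∃ m, n = m + 1 := ⟨n - 1, by omega⟩
  rw [sum_range_succ', hw0] at hA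
  rw [sum_range_succ, show 2 * m + 1 = 2 * (m + 1) - 1 by omega] at hB
  have hsplit : qEven (m + 1) w ((m + 1 : ℕ) - 1) =
      qEven (m + 1) w 0 + ∑ l ∈ Ioc 0 (m : ℤ), qEvenTerm (m + 1) w l := by
    rw [qEven_eq_sum_qEvenTerm, qEven_eq_sum_qEvenTerm,
      show ((m + 1 : ℕ) : ℤ) - 1 = m by push_cast; ring]
    exact sum_Icc_eq_sum_Icc_add_sum_Ioc _ (by omega) (by omega)
  have hterm : ∀ k : ℕ, qEvenTerm (m + 1) w (k + 1) =
      w (2 * (k + 1)) / normW0 (m + 1) w - w (2 * k + 1) / normW1 (m + 1) w := by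
    intro k
    rw [qEvenTerm, show (2 * ((k : ℤ) + 1)).natAbs = 2 * (k + 1) by omega,
      show (2 * ((k : ℤ) + 1) - 1).natAbs = 2 * k + 1 by omega]
  rw [hsplit, qEven_zero hn hw0 hpos, sum_Ioc_zero_natCast]
  simp only [hterm, sum_sub_distrib, ← sum_div]
  generalize normW0 (m + 1) w = N0 at *
  generalize normW1 (m + 1) w = N1 at *
  generalize ∑ k ∈ range m, w (2 * (k + 1)) = S at *
  generalize ∑ k ∈ range m, w (2 * k + 1) = T at *
  field_simp
  linear_combination N0 * hB - N1 * hA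

theorem qEven_one_sub_pos (hn : 1 ≤ n) (hw0 : w 0 = 1) (hpos : ∀ l < 2 * n, 0 < w l)
    (hlc : RatioAntitoneBelow w (2 * n)) : 0 < qEven n w (1 - n) := by
  have hN0 := normW0_pos hpos
  have hN1 := normW1_pos hn hpos
  have hA := normW0_eq_sum_range hn hw0
  have hB := normW1_eq_sum_range (w := w) hn
  obtain ⟨m, rfl⟩ : ∃ m, n = m + 1 := ⟨n - 1, by omega⟩
  have hlast : w (2 * m + 1) * ∑ k ∈ range (m + 1), w (2 * k) ≤
      w (2 * m) * ∑ k ∈ range (m + 1), w (2 * k + 1) := by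
    rw [mul_sum, mul_sum]
    refine sum_le_sum fun k hk => ?_
    rw [mem_range] at hk
    rw [mul_comm, mul_comm (w (2 * m))]
    exact hlc (2 * k) (2 * m) (by omega) (by omega)
  rw [qEven, Icc_self, sum_singleton, sub_pos,
    show (2 * (1 - ((m + 1 : ℕ) : ℤ))).natAbs = 2 * m by omega,
    show (2 * (1 - ((m + 1 : ℕ) : ℤ)) - 1).natAbs = 2 * m + 1 by omega,
    div_lt_div_iff₀ hN1 hN0, hA, hB]
  linarith [hpos (2 * m + 1) (by omega)]

theorem qEvenTerm_nonpos_of_le (hpos : ∀ l < 2 * n, 0 < w l) (hlc : RatioAntitoneBelow w (2 * n))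
    {p q : ℤ} (hp : 1 - (n : ℤ) < p) (hpq : p ≤ q) (hq : q < n) (hblock : q ≤ 0 ∨ 0 < p)
    (hsign : qEvenTerm n w p ≤ 0) : qEvenTerm n w q ≤ 0 := by
  have hcross : w (2 * q).natAbs * w (2 * p - 1).natAbs ≤
      w (2 * p).natAbs * w (2 * q - 1).natAbs := by
    rcases hblock with hq0 | hp0
    · have h := hlc (2 * q).natAbs (2 * p).natAbs (by omega) (by omega)
      rw [show (2 * p).natAbs + 1 = (2 * p - 1).natAbs by omega,
        show (2 * q).natAbs + 1 = (2 * q - 1).natAbs by omega] at h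
      linarith
    · have h := hlc (2 * p - 1).natAbs (2 * q - 1).natAbs (by omega) (by omega)
      rw [show (2 * p - 1).natAbs + 1 = (2 * p).natAbs by omega,
        show (2 * q - 1).natAbs + 1 = (2 * q).natAbs by omega] at h
      linarith
  exact div_sub_div_nonpos_of_mul_le (normW0_pos hpos) (normW1_pos (by omega) hpos)
    (hpos _ (by omega)) (hpos _ (by omega)).le hcross hsign

theorem qEven_pos (hn : 1 ≤ n) (hw0 : w 0 = 1) (hpos : ∀ l < 2 * n, 0 < w l)
    (hlc : RatioAntitoneBelow w (2 * n)) {j : ℤ} (hj₁ : 1 - (n : ℤ) ≤ j) (hj₂ : j ≤ n - 1) :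
    0 < qEven n w j := by
  have hfirst := qEven_one_sub_pos hn hw0 hpos hlc
  have hzero : 0 < qEven n w 0 := by
    rw [qEven_zero hn hw0 hpos]; exact inv_pos.2 (mul_pos two_pos (normW0_pos hpos))
  have hlast : 0 < qEven n w (n - 1) := by
    rw [qEven_sub_one hn hw0 hpos]; exact div_pos (hpos _ (by omega)) (normW1_pos hn hpos)
  rcases le_total j 0 with hj | hj
  · exact (lt_min hfirst hzero).trans_le <| min_le_sum_Icc_of_sign_change_once le_rfl hj₁ hj
      fun p q hp hpq hq => qEvenTerm_nonpos_of_le hpos hlc hp hpq (by omega) (.inl hq)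
  · exact (lt_min hzero hlast).trans_le <| min_le_sum_Icc_of_sign_change_once (by omega) hj hj₂
      fun p q hp hpq hq => qEvenTerm_nonpos_of_le hpos hlc (by omega) hpq (by omega) (.inr hp)

end Weights

theorem qOdd_eq_qEven_neg (n : ℕ) (w : ℕ → ℝ) (j : ℤ) : qOdd n w j = qEven n w (-j) := by
  refine sum_nbij' Neg.neg Neg.neg ?_ ?_ (fun l _ => neg_neg l) (fun l _ => neg_neg l) fun l _ => ?_
  iterate 2 intro l hl; simp only [mem_Icc] at hl ⊢; omega
  rw [show (2 * -l).natAbs = (2 * l).natAbs by omega,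
    show (2 * -l - 1).natAbs = (2 * l + 1).natAbs by omega]

theorem ratioAntitoneBelow_comp_div {φ : ℝ → ℝ} {lam : ℝ} {n : ℕ}
    (hpos : ∀ l < 2 * n, 0 < φ (l / lam))
    (hp0 : AntitoneOn (fun t : ℝ => φ ((2 * t + 1) / lam) / φ (2 * t / lam))
      (Set.Icc (0 : ℝ) ((n : ℝ) - 1))) :
    RatioAntitoneBelow (fun l : ℕ => φ (l / lam)) (2 * n) := by
  intro a b hab hb
  have hb' : (b : ℝ) + 2 ≤ 2 * n := by exact_mod_cast (by omega : b + 2 ≤ 2 * n)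
  have hab' : (a : ℝ) ≤ b := by exact_mod_cast hab
  have h := hp0 ⟨by positivity, by linarith⟩ ⟨by positivity, by linarith⟩
    (by linarith : (a : ℝ) / 2 ≤ b / 2)
  simp only at h
  rw [show 2 * ((a : ℝ) / 2) = a by ring, show 2 * ((b : ℝ) / 2) = b by ring,
    div_le_div_iff₀ (hpos b (by omega)) (hpos a (by omega))] at h
  push_cast
  linarith

theorem stmt10_general (n : ℕ) (hn : 2 ≤ n) (lam : ℝ)
    (hlam1 : 2 * (n : ℝ) - 1 < lam)
    (φ : ℝ → ℝ)
    (hφrange : ∀ x ∈ Set.Icc (0 : ℝ) 1, 0 < φ x ∧ φ x ≤ 1)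
    (hφ0 : φ 0 = 1)
    (hp0 : AntitoneOn (fun t : ℝ => φ ((2 * t + 1) / lam) / φ (2 * t / lam))
      (Set.Icc (0 : ℝ) ((n : ℝ) - 1))) :
    ∀ j : ℤ, 1 - (n : ℤ) ≤ j → j ≤ (n : ℤ) - 1 →
      0 < qEven n (fun l => φ ((l : ℝ) / lam)) j ∧
      0 < qOdd n (fun l => φ ((l : ℝ) / lam)) j := by
  intro j hj₁ hj₂
  have hlam : 0 < lam := by
    have : (2 : ℝ) ≤ n := by exact_mod_cast hn
    linarith
  have hpos : ∀ l < 2 * n, 0 < φ ((l : ℝ) / lam) := by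
    intro l hl
    have hl' : (l : ℝ) + 1 ≤ 2 * n := by exact_mod_cast hl
    exact (hφrange _ ⟨by positivity, (div_le_one hlam).2 (by linarith)⟩).1
  have hw0 : φ (((0 : ℕ) : ℝ) / lam) = 1 := by simp [hφ0]
  have hlc := ratioAntitoneBelow_comp_div hpos hp0
  refine ⟨qEven_pos (by omega) hw0 hpos hlc hj₁ hj₂, ?_⟩
  rw [qOdd_eq_qEven_neg]
  exact qEven_pos (by omega) hw0 hpos hlc (by omega) (by omega)

/-- in the degree-0/1 WLPR setting with weight profile `φ : [0,1] → (0,1]`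
decreasing, `φ(0) = 1`, `n ≥ 2`, `λ ∈ (2n−1, 2n)` and weights `w_l = φ(l/λ)`, if the
function `p₀(t) = φ((2t+1)/λ)/φ(2t/λ)` is decreasing on `[0, n−1]`, then all
coefficients of the difference mask of `S_{1,w^λ}` are positive:
`q_{2j} > 0` and `q_{2j+1} > 0` for all `j = 1−n,…,n−1`. -/
theorem stmt10 (n : ℕ) (hn : 2 ≤ n) (lam : ℝ)
    (hlam1 : 2 * (n : ℝ) - 1 < lam) (hlam2 : lam < 2 * n)
    (φ : ℝ → ℝ)
    (hφrange : ∀ x ∈ Set.Icc (0 : ℝ) 1, 0 < φ x ∧ φ x ≤ 1)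
    (hφ0 : φ 0 = 1)
    (hφanti : AntitoneOn φ (Set.Icc (0 : ℝ) 1))
    (hp0 : AntitoneOn (fun t : ℝ => φ ((2 * t + 1) / lam) / φ (2 * t / lam))
      (Set.Icc (0 : ℝ) ((n : ℝ) - 1))) :
    ∀ j : ℤ, 1 - (n : ℤ) ≤ j → j ≤ (n : ℤ) - 1 →
      0 < qEven n (fun l => φ ((l : ℝ) / lam)) j ∧
      0 < qOdd n (fun l => φ ((l : ℝ) / lam)) j :=
  stmt10_general n hn lam hlam1 φ hφrange hφ0 hp0
end

section
/- Suppose each S_{a^n} reproduces Π₀. Let r : [−1,1] → ℝ be C¹ and set R(t) = ∫_{t}^{1} r(s) ds. Assume there exist α > 2 and μ > 0 such that for all n and all j = 1−n,…,L_n, a^{n,0}_j − a^{n,1}_{j+1} = r(j/n)·n^{−2} + ε^n_j with |ε^n_j| ≤ μ·n^{−α}, and assume ∫_{−1}^{1} |R(t)| dt < 1. Then there exists n₀ ∈ ℕ such that ∑_{j=1−n}^{L_n} |q^{n,1}_j| < 1 for all n ≥ n₀. -/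
/-!
Write `d_l = a^{n,0}_l − a^{n,1}_{l+1}` and `R(t) = ∫_t^1 r`. As `r` is Lipschitz,
`d_l = (R(l/n) − R((l+1)/n))/n + O(n⁻³) + O(n^{-α})` for `l < n`, so telescoping from `R(1) = 0`
gives `q^{n,1}_j = R(j/n)/n + O(n⁻²) + O(n^{1-α})`; the extra coefficient `d_n` present when
`L_n = n` is `O(n⁻²)`. Summing over the at most `2n` indices, `∑ |q^{n,1}_j|` is within
`O(1/n) + O(n^{2-α})` of the Riemann sum `∑ |R(j/n)|/n`, which is within `O(1/n)` of
`∫_{-1}^1 |R| < 1` because `|R|` is Lipschitz.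
-/

/-- `‖q^{n,1}‖₁ = ∑_{j=1−n}^{L_n} |q^{n,1}_j|`, where
`q^{n,1}_j = ∑_{l=j}^{L_n} (a^{n,0}_l − a^{n,1}_{l+1})`. -/
noncomputable def qsum1 (a0 a1 : ℤ → ℝ) (nn Ln : ℤ) : ℝ :=
  ∑ j ∈ Finset.Icc (1 - nn) Ln, |∑ l ∈ Finset.Icc j Ln, (a0 l - a1 (l + 1))|

open MeasureTheory Filter Topology NNReal

theorem abs_sum_Icc_sub_le_of_abs_sub_le (d g : ℤ → ℝ) {a b : ℤ} (hab : a ≤ b + 1) {ε : ℝ}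
    (h : ∀ l ∈ Finset.Icc a b, |d l - (g l - g (l + 1))| ≤ ε) :
    |∑ l ∈ Finset.Icc a b, d l - (g a - g (b + 1))| ≤ (b + 1 - a) * ε := by
  replace hab : a - 1 ≤ b := by omega
  induction b, hab using Int.leInduction with
  | base => simp
  | succ b hab ih =>
    have hb : |d (b + 1) - (g (b + 1) - g (b + 1 + 1))| ≤ ε := h _ (by simp; omega)
    have ih := ih fun l hl => h l (by simp at hl ⊢; omega)
    rw [← Finset.insert_Icc_right_eq_Icc_add_one (by omega), Finset.sum_insert (by simp)]
    calc |d (b + 1) + ∑ l ∈ Finset.Icc a b, d l - (g a - g (b + 1 + 1))|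
        = |(d (b + 1) - (g (b + 1) - g (b + 1 + 1))) +
            (∑ l ∈ Finset.Icc a b, d l - (g a - g (b + 1)))| := by ring_nf
      _ ≤ ε + (b + 1 - a) * ε := (abs_add_le _ _).trans (add_le_add hb ih)
      _ = ((b + 1 : ℤ) + 1 - a) * ε := by push_cast; ring

theorem abs_integral_sub_mul_le_of_lipschitzOnWith {f : ℝ → ℝ} {K : ℝ≥0} {a b c : ℝ}
    (hab : a ≤ b) (hf : LipschitzOnWith K f (Set.Icc a b)) (hc : c ∈ Set.Icc a b) :
    |(∫ x in a..b, f x) - (b - a) * f c| ≤ K * (b - a) ^ 2 := by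
  have hle : ∀ x ∈ Set.uIoc a b, ‖f x - f c‖ ≤ K * (b - a) := by
    intro x hx
    have hx : x ∈ Set.Icc a b := Set.Ioc_subset_Icc_self (Set.uIoc_of_le hab ▸ hx)
    calc ‖f x - f c‖ = dist (f x) (f c) := rfl
      _ ≤ K * dist x c := hf.dist_le_mul x hx c hc
      _ ≤ K * (b - a) := by
        gcongr
        rw [Real.dist_eq, abs_le]
        constructor <;> linarith [hx.1, hx.2, hc.1, hc.2]
  have hint := hf.continuousOn.intervalIntegrable_of_Icc (μ := volume) hab
  have := intervalIntegral.norm_integral_le_of_norm_le_const hle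
  rw [intervalIntegral.integral_sub hint intervalIntegrable_const, intervalIntegral.integral_const,
    smul_eq_mul, Real.norm_eq_abs, abs_of_nonneg (sub_nonneg.2 hab)] at this
  linarith

noncomputable def tailIntegral (r : ℝ → ℝ) (t : ℝ) : ℝ := ∫ s in t..1, r s

theorem tailIntegral_sub_tailIntegral {r : ℝ → ℝ} {a b : ℝ}
    (hab : IntervalIntegrable r volume a b) (hb : IntervalIntegrable r volume b 1) :
    tailIntegral r a - tailIntegral r b = ∫ s in a..b, r s := by
  rw [tailIntegral, tailIntegral, ← intervalIntegral.integral_add_adjacent_intervals hab hb]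
  ring

@[simp]
theorem tailIntegral_one (r : ℝ → ℝ) : tailIntegral r 1 = 0 := intervalIntegral.integral_same

theorem lipschitzOnWith_tailIntegral {r : ℝ → ℝ} {M : ℝ≥0}
    (hr : ContinuousOn r (Set.Icc (-1) 1)) (hrM : ∀ t ∈ Set.Icc (-1 : ℝ) 1, |r t| ≤ M) :
    LipschitzOnWith M (tailIntegral r) (Set.Icc (-1) 1) := by
  have hint : ∀ a ∈ Set.Icc (-1 : ℝ) 1, ∀ b ∈ Set.Icc (-1 : ℝ) 1, IntervalIntegrable r volume a b :=
    fun a ha b hb => (hr.mono (Set.uIcc_subset_Icc ha hb)).intervalIntegrable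
  refine LipschitzOnWith.of_dist_le_mul fun a ha b hb => ?_
  have h1 : (1 : ℝ) ∈ Set.Icc (-1) 1 := by norm_num
  rw [Real.dist_eq, tailIntegral_sub_tailIntegral (hint a ha b hb) (hint b hb 1 h1),
    Real.dist_eq, abs_sub_comm, ← Real.norm_eq_abs]
  refine intervalIntegral.norm_integral_le_of_norm_le_const fun x hx => hrM x ?_
  exact Set.uIcc_subset_Icc ha hb (Set.uIoc_subset_uIcc hx)

theorem LipschitzOnWith.abs {f : ℝ → ℝ} {K : ℝ≥0} {s : Set ℝ} (hf : LipschitzOnWith K f s) :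
    LipschitzOnWith K (fun x => |f x|) s := by
  have := lipschitzWith_one_norm.comp_lipschitzOnWith hf
  rwa [one_mul] at this

theorem intCast_div_natCast_mem_Icc {n : ℕ} (hn : 0 < n) {l : ℤ} (h1 : -(n : ℤ) ≤ l)
    (h2 : l ≤ n) : (l : ℝ) / n ∈ Set.Icc (-1 : ℝ) 1 := by
  have hn' : (0 : ℝ) < n := by exact_mod_cast hn
  constructor
  · rw [le_div_iff₀ hn', neg_one_mul]; exact_mod_cast h1
  · rw [div_le_one hn']; exact_mod_cast h2

section Discretization

variable {r : ℝ → ℝ} {M K : ℝ≥0} {n : ℕ}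

theorem abs_div_sq_sub_tailIntegral_step_le (hrK : LipschitzOnWith K r (Set.Icc (-1) 1))
    (hn : 0 < n) {l : ℤ} (h1 : -(n : ℤ) ≤ l) (h2 : l < n) :
    |r (l / n) / n ^ 2 - (tailIntegral r (l / n) / n - tailIntegral r ((l + 1 : ℤ) / n) / n)|
      ≤ K / n ^ 3 := by
  have hn' : (0 : ℝ) < n := by exact_mod_cast hn
  have hmem := intCast_div_natCast_mem_Icc hn h1 h2.le
  have hmem' := intCast_div_natCast_mem_Icc hn (l := l + 1) (by omega) (by omega)
  rw [← sub_div (tailIntegral r _), tailIntegral_sub_tailIntegral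
    (hrK.continuousOn.mono (Set.uIcc_subset_Icc hmem hmem')).intervalIntegrable
    (hrK.continuousOn.mono (Set.uIcc_subset_Icc hmem' (by norm_num))).intervalIntegrable]
  have hstep : ((l + 1 : ℤ) : ℝ) / n - l / n = 1 / n := by push_cast; ring
  have hle : (l : ℝ) / n ≤ ((l + 1 : ℤ) : ℝ) / n := by rw [← sub_nonneg, hstep]; positivity
  have key := abs_integral_sub_mul_le_of_lipschitzOnWith hle
    (hrK.mono (Set.Icc_subset_Icc hmem.1 hmem'.2)) (Set.left_mem_Icc.2 hle)
  rw [hstep] at key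
  calc |r (l / n) / n ^ 2 - (∫ s in (l : ℝ) / n..((l + 1 : ℤ) : ℝ) / n, r s) / n|
      = |(∫ s in (l : ℝ) / n..((l + 1 : ℤ) : ℝ) / n, r s) - 1 / n * r (l / n)| / n := by
        rw [← abs_of_pos hn', ← abs_div, abs_of_pos hn', abs_sub_comm]
        congr 1
        field_simp
    _ ≤ K * (1 / n) ^ 2 / n := by gcongr
    _ = K / n ^ 3 := by ring

theorem abs_sum_Icc_sub_one_sub_tailIntegral_le (hrK : LipschitzOnWith K r (Set.Icc (-1) 1))
    (hn : 0 < n) (d : ℤ → ℝ) {ε : ℝ} (hε : 0 ≤ ε) {j : ℤ} (hj : 1 - n ≤ j ∧ j ≤ n)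
    (hd : ∀ l ∈ Finset.Icc j (n - 1 : ℤ), |d l - r (l / n) / n ^ 2| ≤ ε) :
    |∑ l ∈ Finset.Icc j (n - 1 : ℤ), d l - tailIntegral r (j / n) / n|
      ≤ 2 * n * (ε + K / n ^ 3) := by
  have key := abs_sum_Icc_sub_le_of_abs_sub_le d (fun l => tailIntegral r (l / n) / n)
    (a := j) (b := n - 1) (by omega) (ε := ε + K / n ^ 3) fun l hl => by
      rw [Finset.mem_Icc] at hl
      calc _ ≤ |d l - r (l / n) / n ^ 2| + |r (l / n) / n ^ 2
              - (tailIntegral r (l / n) / n - tailIntegral r ((l + 1 : ℤ) / n) / n)| :=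
            abs_sub_le _ _ _
        _ ≤ ε + K / n ^ 3 := add_le_add (hd l (Finset.mem_Icc.2 hl))
              (abs_div_sq_sub_tailIntegral_step_le hrK hn (by omega) (by omega))
  have hn' : (0 : ℝ) < n := by exact_mod_cast hn
  rw [sub_add_cancel, Int.cast_natCast, div_self hn'.ne', tailIntegral_one, zero_div,
    sub_zero] at key
  refine key.trans (mul_le_mul_of_nonneg_right ?_ (by positivity))
  have : (1 - n : ℝ) ≤ j := by exact_mod_cast hj.1
  push_cast
  linarith

theorem abs_sum_Icc_sub_tailIntegral_le (hrM : ∀ t ∈ Set.Icc (-1 : ℝ) 1, |r t| ≤ M)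
    (hrK : LipschitzOnWith K r (Set.Icc (-1) 1)) (hn : 0 < n) {L : ℤ} (hL : n - 1 ≤ L ∧ L ≤ n)
    (d : ℤ → ℝ) {ε : ℝ} (hd : ∀ l : ℤ, 1 - n ≤ l → l ≤ L → |d l - r (l / n) / n ^ 2| ≤ ε)
    {j : ℤ} (hj : 1 - n ≤ j ∧ j ≤ L) :
    |∑ l ∈ Finset.Icc j L, d l - tailIntegral r (j / n) / n|
      ≤ 2 * n * (ε + K / n ^ 3) + (ε + M / n ^ 2) := by
  have hε : 0 ≤ ε := (abs_nonneg _).trans (hd j hj.1 hj.2)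
  have hbody := abs_sum_Icc_sub_one_sub_tailIntegral_le hrK hn d hε (j := j) (by omega)
    fun l hl => hd l (hj.1.trans (Finset.mem_Icc.1 hl).1) (by simp at hl; omega)
  rcases (by omega : L = n - 1 ∨ L = n) with rfl | rfl
  · linarith [add_nonneg hε (by positivity : (0 : ℝ) ≤ M / n ^ 2)]
  have htop : |d n| ≤ ε + M / n ^ 2 := by
    have hmem := intCast_div_natCast_mem_Icc hn (l := n) (by omega) le_rfl
    have h := hd n (by omega) le_rfl
    rw [Int.cast_natCast] at hmem h
    calc |d n|
        ≤ |d n - r (n / n) / n ^ 2| + |r (n / n) / n ^ 2| := by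
          simpa using abs_sub_le (d n) (r (n / n) / n ^ 2) 0
      _ ≤ ε + M / n ^ 2 := by
        rw [abs_div, abs_of_pos (by positivity : (0 : ℝ) < n ^ 2)]
        gcongr
        exact hrM _ hmem
  have hsplit : Finset.Icc j (n : ℤ) = insert (n : ℤ) (Finset.Icc j (n - 1 : ℤ)) := by
    simpa using (Finset.insert_Icc_right_eq_Icc_add_one (a := j) (b := n - 1) (by omega)).symm
  rw [hsplit, Finset.sum_insert (by simp)]
  calc _ ≤ |d n| + |∑ l ∈ Finset.Icc j (n - 1 : ℤ), d l - tailIntegral r (j / n) / n| := by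
        rw [add_sub_assoc]; exact abs_add_le _ _
    _ ≤ _ := by linarith

theorem abs_abs_tailIntegral_div_sub_step_le (hr : ContinuousOn r (Set.Icc (-1) 1))
    (hrM : ∀ t ∈ Set.Icc (-1 : ℝ) 1, |r t| ≤ M) (hn : 0 < n) {j : ℤ} (h1 : 1 - (n : ℤ) ≤ j)
    (h2 : j ≤ n) :
    |(|tailIntegral r (j / n)| / n) - (tailIntegral (fun t => |tailIntegral r t|) ((j - 1 : ℤ) / n)
      - tailIntegral (fun t => |tailIntegral r t|) (j / n))| ≤ M / n ^ 2 := by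
  have hR := (lipschitzOnWith_tailIntegral hr hrM).abs
  have hmem := intCast_div_natCast_mem_Icc hn (l := j) (by omega) h2
  have hmem' := intCast_div_natCast_mem_Icc hn (l := j - 1) (by omega) (by omega)
  rw [tailIntegral_sub_tailIntegral
    (hR.continuousOn.mono (Set.uIcc_subset_Icc hmem' hmem)).intervalIntegrable
    (hR.continuousOn.mono (Set.uIcc_subset_Icc hmem (by norm_num))).intervalIntegrable]
  have hstep : (j : ℝ) / n - ((j - 1 : ℤ) : ℝ) / n = 1 / n := by push_cast; ring
  have hle : ((j - 1 : ℤ) : ℝ) / n ≤ j / n := by rw [← sub_nonneg, hstep]; positivity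
  have key := abs_integral_sub_mul_le_of_lipschitzOnWith hle
    (hR.mono (Set.Icc_subset_Icc hmem'.1 hmem.2)) (Set.right_mem_Icc.2 hle)
  rw [hstep, abs_sub_comm] at key
  convert key using 2 <;> ring

theorem sum_Icc_abs_tailIntegral_div_le (hr : ContinuousOn r (Set.Icc (-1) 1))
    (hrM : ∀ t ∈ Set.Icc (-1 : ℝ) 1, |r t| ≤ M) (hn : 0 < n) {L : ℤ}
    (hL : -n ≤ L ∧ L ≤ n) :
    ∑ j ∈ Finset.Icc (1 - n : ℤ) L, |tailIntegral r (j / n)| / n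
      ≤ (∫ t in (-1)..1, |tailIntegral r t|) + 2 * M / n := by
  have hn' : (0 : ℝ) < n := by exact_mod_cast hn
  set H := tailIntegral fun t => |tailIntegral r t|
  have key := abs_sum_Icc_sub_le_of_abs_sub_le (fun j : ℤ => |tailIntegral r (j / n)| / n)
    (fun j => H ((j - 1 : ℤ) / n)) (a := 1 - n) (b := L) (by omega) (ε := M / n ^ 2)
    fun j hj => by
      rw [add_sub_cancel_right]
      exact abs_abs_tailIntegral_div_sub_step_le hr hrM hn (Finset.mem_Icc.1 hj).1
        ((Finset.mem_Icc.1 hj).2.trans hL.2)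
  have hH : 0 ≤ H (L / n) :=
    intervalIntegral.integral_nonneg (intCast_div_natCast_mem_Icc hn hL.1 hL.2).2
      fun _ _ => abs_nonneg _
  have hH1 : H ((-n : ℤ) / n) = ∫ t in (-1)..1, |tailIntegral r t| := by
    push_cast; rw [neg_div, div_self hn'.ne']; rfl
  have hcard : ((L : ℝ) + 1 - (1 - n : ℤ)) * (M / n ^ 2) ≤ 2 * M / n := by
    have : (L : ℝ) ≤ n := by exact_mod_cast hL.2
    calc ((L : ℝ) + 1 - (1 - n : ℤ)) * (M / n ^ 2) ≤ (2 * n) * (M / n ^ 2) := by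
          gcongr; push_cast; linarith
      _ = 2 * (M : ℝ) / n := by field_simp
  rw [show (1 - n : ℤ) - 1 = -n by ring, add_sub_cancel_right, hH1] at key
  linarith [(abs_le.1 key).2]

theorem qsum1_le (hrM : ∀ t ∈ Set.Icc (-1 : ℝ) 1, |r t| ≤ M)
    (hrK : LipschitzOnWith K r (Set.Icc (-1) 1)) (hn : 0 < n) {L : ℤ} (hL : n - 1 ≤ L ∧ L ≤ n)
    (a0 a1 : ℤ → ℝ) {ε : ℝ}
    (hd : ∀ l : ℤ, 1 - n ≤ l → l ≤ L → |a0 l - a1 (l + 1) - r (l / n) / n ^ 2| ≤ ε) :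
    qsum1 a0 a1 n L
      ≤ (∫ t in (-1)..1, |tailIntegral r t|) + (4 * M + 4 * K) / n + 6 * n ^ 2 * ε := by
  have hn' : (0 : ℝ) < n := by exact_mod_cast hn
  have hε : 0 ≤ ε := (abs_nonneg _).trans (hd L (by omega) le_rfl)
  set e : ℝ := 2 * n * (ε + K / n ^ 3) + (ε + M / n ^ 2)
  have hterm : ∀ j ∈ Finset.Icc (1 - n : ℤ) L,
      |∑ l ∈ Finset.Icc j L, (a0 l - a1 (l + 1))| ≤ |tailIntegral r (j / n)| / n + e := by
    intro j hj
    have h := abs_sum_Icc_sub_tailIntegral_le hrM hrK hn hL (fun l => a0 l - a1 (l + 1)) hd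
      (Finset.mem_Icc.1 hj)
    rw [← abs_of_pos hn', ← abs_div, abs_of_pos hn']
    linarith [abs_sub_abs_le_abs_sub (∑ l ∈ Finset.Icc j L, (a0 l - a1 (l + 1)))
      (tailIntegral r (j / n) / n)]
  have hcard : ((Finset.Icc (1 - n : ℤ) L).card : ℝ) ≤ 2 * n := by
    have := Int.card_Icc_of_le (1 - n) L (by omega)
    have : ((Finset.Icc (1 - n : ℤ) L).card : ℤ) ≤ 2 * n := by omega
    exact_mod_cast this
  calc qsum1 a0 a1 n L
      ≤ ∑ j ∈ Finset.Icc (1 - n : ℤ) L, (|tailIntegral r (j / n)| / n + e) :=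
        Finset.sum_le_sum hterm
    _ = ∑ j ∈ Finset.Icc (1 - n : ℤ) L, |tailIntegral r (j / n)| / n
          + (Finset.Icc (1 - n : ℤ) L).card * e := by
        rw [Finset.sum_add_distrib, Finset.sum_const, nsmul_eq_mul]
    _ ≤ (∫ t in (-1)..1, |tailIntegral r t|) + 2 * M / n + 2 * n * e := by
        gcongr
        exact sum_Icc_abs_tailIntegral_div_le hrK.continuousOn hrM hn (by omega)
    _ ≤ (∫ t in (-1)..1, |tailIntegral r t|) + (4 * M + 4 * K) / n + 6 * n ^ 2 * ε := by
        have : 2 * n * ε ≤ 2 * n ^ 2 * ε := by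
          gcongr; exact_mod_cast Nat.le_self_pow two_ne_zero n
        have : 2 * n * e = 4 * n ^ 2 * ε + 2 * n * ε + (2 * M + 4 * K) / n := by
          simp only [e]; field_simp; ring
        have : (4 * M + 4 * K : ℝ) / n = 2 * M / n + (2 * M + 4 * K) / n := by ring
        linarith

end Discretization

theorem tendsto_natCast_sq_mul_div_rpow_atTop {α : ℝ} (hα : 2 < α) (μ : ℝ) :
    Tendsto (fun n : ℕ => (n : ℝ) ^ 2 * (μ / (n : ℝ) ^ α)) atTop (𝓝 0) := by
  have h := ((tendsto_rpow_neg_atTop (y := α - 2) (by linarith)).comp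
    tendsto_natCast_atTop_atTop).const_mul μ
  rw [mul_zero] at h
  refine h.congr' ((eventually_gt_atTop 0).mono fun n hn => ?_)
  have hn' : (0 : ℝ) < n := by exact_mod_cast hn
  simp only [Function.comp_apply, Real.rpow_neg hn'.le, Real.rpow_sub hn', Real.rpow_two]
  field_simp

theorem exists_lipschitzOnWith_of_hasDerivWithinAt {f f' : ℝ → ℝ} {a b : ℝ}
    (hf : ∀ t ∈ Set.Icc a b, HasDerivWithinAt f (f' t) (Set.Icc a b) t)
    (hf' : ContinuousOn f' (Set.Icc a b)) : ∃ K, LipschitzOnWith K f (Set.Icc a b) := by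
  obtain ⟨C, hC⟩ := isCompact_Icc.exists_bound_of_continuousOn hf'
  refine ⟨C.toNNReal, (convex_Icc a b).lipschitzOnWith_of_nnnorm_hasDerivWithin_le hf
    fun t ht => ?_⟩
  rw [← NNReal.coe_le_coe, coe_nnnorm]
  exact (hC t ht).trans (Real.le_coe_toNNReal C)

theorem exists_abs_le_of_continuousOn {f : ℝ → ℝ} {s : Set ℝ} (hs : IsCompact s)
    (hf : ContinuousOn f s) : ∃ M : ℝ≥0, ∀ t ∈ s, |f t| ≤ M := by
  obtain ⟨C, hC⟩ := hs.exists_bound_of_continuousOn hf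
  exact ⟨C.toNNReal, fun t ht => (hC t ht).trans (Real.le_coe_toNNReal C)⟩

theorem stmt17_general
    (a0 a1 : ℕ → ℤ → ℝ) (L : ℕ → ℤ)
    (hL : (∀ n : ℕ, L n = (n : ℤ) - 1) ∨ (∀ n : ℕ, L n = (n : ℤ)))
    (r r' : ℝ → ℝ)
    (hr' : ∀ t ∈ Set.Icc (-1 : ℝ) 1, HasDerivWithinAt r (r' t) (Set.Icc (-1 : ℝ) 1) t)
    (hr'c : ContinuousOn r' (Set.Icc (-1 : ℝ) 1))
    (α μ : ℝ) (hα : 2 < α)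
    (herr : ∀ n : ℕ, 1 ≤ n → ∀ j : ℤ, 1 - (n : ℤ) ≤ j → j ≤ L n →
      |a0 n j - a1 n (j + 1) - r ((j : ℝ) / n) / (n : ℝ) ^ 2| ≤ μ / (n : ℝ) ^ α)
    (hRlt : (∫ t in (-1 : ℝ)..1, |∫ s in t..(1 : ℝ), r s|) < 1) :
    ∃ n₀ : ℕ, ∀ n : ℕ, n₀ ≤ n → qsum1 (a0 n) (a1 n) n (L n) < 1 := by
  obtain ⟨K, hK⟩ := exists_lipschitzOnWith_of_hasDerivWithinAt hr' hr'c
  obtain ⟨M, hM⟩ := exists_abs_le_of_continuousOn isCompact_Icc hK.continuousOn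
  have hLn : ∀ n : ℕ, (n : ℤ) - 1 ≤ L n ∧ L n ≤ n := fun n => by
    rcases hL with h | h <;> rw [h n] <;> omega
  set I := ∫ t in (-1 : ℝ)..1, |tailIntegral r t|
  have hbound : ∀ᶠ n : ℕ in atTop, qsum1 (a0 n) (a1 n) n (L n)
      ≤ I + ((4 * M + 4 * K) / n + 6 * (n ^ 2 * (μ / (n : ℝ) ^ α))) :=
    (eventually_ge_atTop 1).mono fun n hn => by
      have := qsum1_le hM hK hn (hLn n) (a0 n) (a1 n) (herr n hn)
      linarith
  have hsmall : ∀ᶠ n : ℕ in atTop,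
      (4 * M + 4 * K) / n + 6 * (n ^ 2 * (μ / (n : ℝ) ^ α)) < 1 - I := by
    refine Tendsto.eventually_lt_const (sub_pos.2 hRlt) ?_
    simpa using (tendsto_const_div_atTop_nhds_zero_nat _).add
      ((tendsto_natCast_sq_mul_div_rpow_atTop hα μ).const_mul 6)
  exact eventually_atTop.1 ((hbound.and hsmall).mono fun n h => by linarith [h.1, h.2])

/-- for a family of subdivision schemes `S_{a^n}` reproducing `Π₀`
(with `L_n = n−1` for all `n` or `L_n = n` for all `n`), a `C¹` function
`r : [−1,1] → ℝ` with `R(t) = ∫_t^1 r`, if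
`a^{n,0}_j − a^{n,1}_{j+1} = r(j/n) n^{−2} + ε^n_j` with `|ε^n_j| ≤ μ n^{−α}`
(`α > 2`, `μ > 0`) and `∫_{−1}^1 |R| < 1`, then there is `n₀ ∈ ℕ` with
`∑_{j=1−n}^{L_n} |q^{n,1}_j| < 1` for all `n ≥ n₀`. -/
theorem stmt17
    (a0 a1 : ℕ → ℤ → ℝ) (L : ℕ → ℤ)
    (hL : (∀ n : ℕ, L n = (n : ℤ) - 1) ∨ (∀ n : ℕ, L n = (n : ℤ)))
    (hrep : ∀ n : ℕ, 1 ≤ n →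
      (∑ l ∈ Finset.Icc (1 - (n : ℤ)) (L n), a0 n l) = 1 ∧
      (∑ l ∈ Finset.Icc (1 - (n : ℤ)) (L n + 1), a1 n l) = 1)
    (r r' : ℝ → ℝ)
    (hr' : ∀ t ∈ Set.Icc (-1 : ℝ) 1, HasDerivWithinAt r (r' t) (Set.Icc (-1 : ℝ) 1) t)
    (hr'c : ContinuousOn r' (Set.Icc (-1 : ℝ) 1))
    (α μ : ℝ) (hα : 2 < α) (hμ : 0 < μ)
    (herr : ∀ n : ℕ, 1 ≤ n → ∀ j : ℤ, 1 - (n : ℤ) ≤ j → j ≤ L n →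
      |a0 n j - a1 n (j + 1) - r ((j : ℝ) / n) / (n : ℝ) ^ 2| ≤ μ / (n : ℝ) ^ α)
    (hRlt : (∫ t in (-1 : ℝ)..1, |∫ s in t..(1 : ℝ), r s|) < 1) :
    ∃ n₀ : ℕ, ∀ n : ℕ, n₀ ≤ n → qsum1 (a0 n) (a1 n) n (L n) < 1 :=
  stmt17_general a0 a1 L hL r r' hr' hr'c α μ hα herr hRlt
end
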